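/- Validity of the dynamic-programming single-level reformulation of the CPP: let a CPP be given, together with a finite directed multigraph (finite vertex type V with distinguished p, q; finite arc type A with maps u, w : A → V) and item sets I : A → Finset ι, and for a feasible toll t let F(a;t) = Σ_{i∈I a}(v i − t i). Assume: (i) the multigraph is acyclic; (ii) every vertex admits an arc path to q; (iii) for every feasible toll t, the maximum of Σ_k F(aₖ;t) over all p–q paths equals max_{S∈𝒳} Σ_{i∈S}(v i − t i). Then the optimistic CPP value equals the supremum of Σ_{i∈S} t i over all triples (t, S, y) where t is a feasible toll, S ∈ 𝒳, and y : V → ℝ satisfies y q = 0, y (u a) ≥ F(a;t) + y (w a) for every a ∈ A, and Σ_{i∈S}(v i − t i) = y p. -/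

import Mathlib

/-!
Fix a feasible toll and let `F a` be the arc lengths. By hypothesis the follower's optimal value
is the length of a longest `p`–`q` path, and on an acyclic graph this is also the least value
`y p` of a potential with `y q = 0` and `y (u a) ≥ F a + y (w a)`: every potential bounds each
path by telescoping, and the longest-path value function is a potential attaining the bound
(it is finite because paths in an acyclic graph repeat no arc). So `S ∈ 𝒳` is an optimal
response exactly when its value is `y p` for some such potential, and the two sets of revenues,
not only their suprema, coincide.
-/

open Finset

/-- A `p`–`q` path in a directed multigraph with arcs `A`, source map `u` and target
map `w`: a nonempty list of arcs with matching consecutive endpoints, starting at `p`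
and ending at `q`. -/
def IsArcPath {V A : Type*} (u w : A → V) (p q : V) (l : List A) : Prop :=
  ∃ h : l ≠ [], l.Chain' (fun a b => w a = u b) ∧
    u (l.head h) = p ∧ w (l.getLast h) = q

section ArcPaths

variable {V A : Type*} {u w : A → V}

theorem List.IsChain.nodup_of_acyclic
    (hacyc : ¬ ∃ l : List A, ∃ h : l ≠ [],
      l.IsChain (fun a b => w a = u b) ∧ w (l.getLast h) = u (l.head h)) :
    ∀ {l : List A}, l.IsChain (fun a b => w a = u b) → l.Nodup
  | [], _ => List.nodup_nil
  | a :: l, hc => by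
    refine List.nodup_cons.2 ⟨fun ha => ?_, nodup_of_acyclic hacyc hc.tail⟩
    obtain ⟨s, t, rfl⟩ := List.append_of_mem ha
    rw [← List.cons_append, List.isChain_append] at hc
    exact hacyc ⟨a :: s, List.cons_ne_nil _ _, hc.1,
      hc.2.2 _ (List.getLast?_eq_some_getLast _) _ rfl⟩

theorem List.IsChain.sum_map_add_le (F : A → ℝ) (y : V → ℝ)
    (hy : ∀ a, F a + y (w a) ≤ y (u a)) :
    ∀ {l : List A} (h : l ≠ []), l.IsChain (fun a b => w a = u b) →
      (l.map F).sum + y (w (l.getLast h)) ≤ y (u (l.head h))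
  | [a], _, _ => by simpa using hy a
  | a :: b :: l, _, hc => by
    rw [List.isChain_cons_cons] at hc
    have htail := sum_map_add_le F y hy (List.cons_ne_nil b l) hc.2
    simp only [List.map_cons, List.sum_cons, List.head_cons,
      List.getLast_cons (List.cons_ne_nil b l)] at htail ⊢
    linarith [hc.1 ▸ hy a]

theorem IsArcPath.singleton (a : A) : IsArcPath u w (u a) (w a) [a] :=
  ⟨List.cons_ne_nil a [], List.isChain_singleton a, rfl, rfl⟩

theorem IsArcPath.cons {a : A} {z : V} {l : List A} (hl : IsArcPath u w (w a) z l) :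
    IsArcPath u w (u a) z (a :: l) := by
  obtain ⟨hne, hc, hhead, hlast⟩ := hl
  refine ⟨List.cons_ne_nil a l, ?_, rfl, by rwa [List.getLast_cons hne]⟩
  rw [← List.cons_head_tail hne] at hc ⊢
  exact hc.cons_cons hhead.symm

def arcPathValues (u w : A → V) (F : A → ℝ) (x z : V) : Set ℝ :=
  {r | ∃ l : List A, IsArcPath u w x z l ∧ r = (l.map F).sum}

variable (hacyc : ¬ ∃ l : List A, ∃ h : l ≠ [],
  l.IsChain (fun a b => w a = u b) ∧ w (l.getLast h) = u (l.head h))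
include hacyc

theorem arcPathValues_self (F : A → ℝ) (x : V) : arcPathValues u w F x x = ∅ := by
  refine Set.eq_empty_of_forall_notMem ?_
  rintro _ ⟨l, ⟨hne, hc, rfl, hl⟩, -⟩
  exact hacyc ⟨l, hne, hc, hl⟩

theorem bddAbove_arcPathValues [Fintype A] (F : A → ℝ) (x z : V) :
    BddAbove (arcPathValues u w F x z) := by
  classical
  refine ⟨∑ a, max (F a) 0, ?_⟩
  rintro _ ⟨l, ⟨-, hc, -⟩, rfl⟩
  calc (l.map F).sum = ∑ a ∈ l.toFinset, F a :=
        (List.sum_toFinset F (hc.nodup_of_acyclic hacyc)).symm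
    _ ≤ ∑ a ∈ l.toFinset, max (F a) 0 := sum_le_sum fun a _ => le_max_left _ _
    _ ≤ ∑ a, max (F a) 0 :=
        sum_le_sum_of_subset_of_nonneg (subset_univ _) fun a _ _ => le_max_right _ _

/-- This is `0` when there is no `x`–`q` path (`sSup ∅ = 0`), which is the right value at
`x = q`. -/
noncomputable def longestPathValue (u w : A → V) (F : A → ℝ) (q x : V) : ℝ :=
  sSup (arcPathValues u w F x q)

theorem longestPathValue_self (F : A → ℝ) (q : V) : longestPathValue u w F q q = 0 := by
  rw [longestPathValue, arcPathValues_self hacyc, Real.sSup_empty]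

theorem add_longestPathValue_le [Fintype A] (F : A → ℝ) {q : V} {a : A}
    (hreach : w a = q ∨ ∃ l : List A, IsArcPath u w (w a) q l) :
    F a + longestPathValue u w F q (w a) ≤ longestPathValue u w F q (u a) := by
  have hbdd := bddAbove_arcPathValues hacyc F (u a) q
  rcases hreach with rfl | ⟨l, hl⟩
  · rw [longestPathValue_self hacyc, add_zero]
    exact le_csSup hbdd ⟨[a], IsArcPath.singleton a, by simp⟩
  · rw [← le_sub_iff_add_le']
    refine csSup_le ⟨_, l, hl, rfl⟩ ?_
    rintro _ ⟨m, hm, rfl⟩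
    rw [le_sub_iff_add_le']
    exact le_csSup hbdd ⟨a :: m, hm.cons, by simp⟩

theorem isLeast_potential_of_isGreatest_arcPathValues [Fintype A] {F : A → ℝ} {p q : V} {M : ℝ}
    (hreach : ∀ x : V, x = q ∨ ∃ l : List A, IsArcPath u w x q l)
    (hM : IsGreatest (arcPathValues u w F p q) M) :
    IsLeast {c | ∃ y : V → ℝ, y q = 0 ∧ (∀ a, y (u a) ≥ F a + y (w a)) ∧ c = y p} M := by
  refine ⟨⟨longestPathValue u w F q, longestPathValue_self hacyc F q,
    fun a => add_longestPathValue_le hacyc F (hreach (w a)), hM.csSup_eq.symm⟩, ?_⟩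
  rintro _ ⟨y, hyq, hy, rfl⟩
  obtain ⟨l, ⟨hne, hc, hhead, hlast⟩, rfl⟩ := hM.1
  simpa only [hhead, hlast, hyq, add_zero] using hc.sum_map_add_le F y hy hne

end ArcPaths

theorem cpp_dp_single_level_reformulation_general {ι V A : Type*}
    [Fintype A]
    (I₁ I₂ : Finset ι)
    (v : ι → ℝ) (𝒳 : Finset (Finset ι)) (h𝒳 : 𝒳.Nonempty)
    (p q : V) (u w : A → V) (I : A → Finset ι)
    (hacyc : ¬ ∃ l : List A, ∃ h : l ≠ [],
      l.Chain' (fun a b => w a = u b) ∧ w (l.getLast h) = u (l.head h))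
    (hreach : ∀ x : V, x = q ∨ ∃ l : List A, IsArcPath u w x q l)
    (hdp : ∀ t : ι → ℝ, (∀ i ∈ I₁, 0 ≤ t i) → (∀ i ∈ I₂, t i = 0) →
      IsGreatest {r : ℝ | ∃ l : List A, IsArcPath u w p q l ∧
          r = (l.map (fun a => ∑ i ∈ I a, (v i - t i))).sum}
        (𝒳.sup' h𝒳 (fun S => ∑ i ∈ S, (v i - t i)))) :
    sSup {r : ℝ | ∃ t : ι → ℝ, (∀ i ∈ I₁, 0 ≤ t i) ∧ (∀ i ∈ I₂, t i = 0) ∧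
      ∃ S ∈ 𝒳, (∀ S' ∈ 𝒳, ∑ i ∈ S', (v i - t i) ≤ ∑ i ∈ S, (v i - t i)) ∧
        r = ∑ i ∈ S, t i} =
    sSup {r : ℝ | ∃ t : ι → ℝ, (∀ i ∈ I₁, 0 ≤ t i) ∧ (∀ i ∈ I₂, t i = 0) ∧
      ∃ S ∈ 𝒳, ∃ y : V → ℝ, y q = 0 ∧
        (∀ a : A, y (u a) ≥ (∑ i ∈ I a, (v i - t i)) + y (w a)) ∧
        (∑ i ∈ S, (v i - t i) = y p) ∧
        r = ∑ i ∈ S, t i} := by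
  congr 1
  ext r
  refine exists_congr fun t => and_congr_right fun ht₁ => and_congr_right fun ht₂ => ?_
  refine exists_congr fun S => and_congr_right fun hS => ?_
  have hleast := isLeast_potential_of_isGreatest_arcPathValues hacyc hreach (hdp t ht₁ ht₂)
  have hle : ∑ i ∈ S, (v i - t i) ≤ 𝒳.sup' h𝒳 (fun S => ∑ i ∈ S, (v i - t i)) :=
    le_sup' (fun S => ∑ i ∈ S, (v i - t i)) hS
  have hopt : (∀ S' ∈ 𝒳, ∑ i ∈ S', (v i - t i) ≤ ∑ i ∈ S, (v i - t i)) ↔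
      ∃ y : V → ℝ, y q = 0 ∧ (∀ a : A, y (u a) ≥ (∑ i ∈ I a, (v i - t i)) + y (w a)) ∧
        ∑ i ∈ S, (v i - t i) = y p := by
    rw [← sup'_le_iff h𝒳]
    exact ⟨fun h => le_antisymm hle h ▸ hleast.1, fun h => hleast.2 h⟩
  rw [hopt]
  simp only [← exists_and_right, and_assoc]

/-- Validity of the dynamic-programming single-level reformulation of
the CPP: if the DP multigraph is acyclic, every vertex reaches `q`, and for every
feasible toll the maximum `p`–`q` path length (arc lengths `F(a;t) = ∑_{i ∈ I a} (v i - t i)`)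
equals the follower's optimal value, then the optimistic CPP value equals the supremum of
the leader revenues over the single-level reformulation's feasible triples `(t, S, y)`. -/
theorem cpp_dp_single_level_reformulation {ι V A : Type*}
    [Fintype ι] [DecidableEq ι] [Fintype V] [Fintype A]
    (I₁ I₂ : Finset ι) (hpart : I₁ ∪ I₂ = Finset.univ) (hdisj : Disjoint I₁ I₂)
    (v : ι → ℝ) (𝒳 : Finset (Finset ι)) (h𝒳 : 𝒳.Nonempty)
    (p q : V) (u w : A → V) (I : A → Finset ι)
    (hacyc : ¬ ∃ l : List A, ∃ h : l ≠ [],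
      l.Chain' (fun a b => w a = u b) ∧ w (l.getLast h) = u (l.head h))
    (hreach : ∀ x : V, x = q ∨ ∃ l : List A, IsArcPath u w x q l)
    (hdp : ∀ t : ι → ℝ, (∀ i ∈ I₁, 0 ≤ t i) → (∀ i ∈ I₂, t i = 0) →
      IsGreatest {r : ℝ | ∃ l : List A, IsArcPath u w p q l ∧
          r = (l.map (fun a => ∑ i ∈ I a, (v i - t i))).sum}
        (𝒳.sup' h𝒳 (fun S => ∑ i ∈ S, (v i - t i)))) :
    sSup {r : ℝ | ∃ t : ι → ℝ, (∀ i ∈ I₁, 0 ≤ t i) ∧ (∀ i ∈ I₂, t i = 0) ∧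
      ∃ S ∈ 𝒳, (∀ S' ∈ 𝒳, ∑ i ∈ S', (v i - t i) ≤ ∑ i ∈ S, (v i - t i)) ∧
        r = ∑ i ∈ S, t i} =
    sSup {r : ℝ | ∃ t : ι → ℝ, (∀ i ∈ I₁, 0 ≤ t i) ∧ (∀ i ∈ I₂, t i = 0) ∧
      ∃ S ∈ 𝒳, ∃ y : V → ℝ, y q = 0 ∧
        (∀ a : A, y (u a) ≥ (∑ i ∈ I a, (v i - t i)) + y (w a)) ∧
        (∑ i ∈ S, (v i - t i) = y p) ∧
        r = ∑ i ∈ S, t i} :=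
  cpp_dp_single_level_reformulation_general I₁ I₂ v 𝒳 h𝒳 p q u w I hacyc hreach hdp
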